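/- Let Δ be an m-gon (m ≥ 2) in a Z^n-quiver and v ∈ Δ. Then there is a unique ordering v_1,…,v_m of Δ with v_1 = v and nonempty pairwise disjoint sets of arrow types I_1,…,I_m partitioning the full set of types such that v_{i+1} = I_i · v_i for i=1,…,m−1 and v_1 = I_m · v_m. In particular m ≤ n+1. -/
import Mathlib


open CategoryTheory CategoryTheory.Limits

universe u v

/-- A quiver with arrows partitioned into `n+1` arrow types. -/
structure TypedQuiver (n : ℕ) where
  V : Type
  E : Type
  src : E → V
  tgt : E → V
  typ : E → Fin (n + 1)

namespace TypedQuiver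

variable {n : ℕ}

/-- Paths in a typed quiver. -/
inductive Path (Q : TypedQuiver n) : Q.V → Q.V → Type where
  | nil (v : Q.V) : Path Q v v
  | cons {u : Q.V} (e : Q.E) (γ : Path Q u (Q.src e)) : Path Q u (Q.tgt e)

namespace Path

variable {Q : TypedQuiver n}

/-- Length of a path. -/
def length : ∀ {u w : Q.V}, Q.Path u w → ℕ
  | _, _, nil _ => 0
  | _, _, cons _ γ => length γ + 1

/-- The number of arrows of a given type in a path. -/
def count : ∀ {u w : Q.V}, Q.Path u w → Fin (n + 1) → ℕ
  | _, _, nil _, _ => 0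
  | _, _, cons e γ, t => count γ t + (if Q.typ e = t then 1 else 0)

/-- Concatenation of paths. -/
def comp : ∀ {u w x : Q.V}, Q.Path u w → Q.Path w x → Q.Path u x
  | _, _, _, γ, nil _ => γ
  | _, _, _, γ, cons e δ => cons e (comp γ δ)

/-- A path is admissible if some arrow type does not occur in it. -/
def Admissible {u w : Q.V} (γ : Q.Path u w) : Prop := ∃ t, γ.count t = 0

/-- A path is simple if each arrow type occurs at most once. -/
def Simple {u w : Q.V} (γ : Q.Path u w) : Prop := ∀ t, γ.count t ≤ 1

/-- A maximal simple path: each arrow type occurs exactly once. -/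
def MaximalSimple {u w : Q.V} (γ : Q.Path u w) : Prop := ∀ t, γ.count t = 1

/-- The essential type of a path: the set of arrow types occurring in it. -/
def essType {u w : Q.V} (γ : Q.Path u w) : Set (Fin (n + 1)) := {t | 0 < γ.count t}

end Path

/-- A `ℤⁿ`-structure on a typed quiver. -/
structure IsZn (Q : TypedQuiver n) : Prop where
  npos : 0 < n
  nonempty : Nonempty Q.V
  unique_out : ∀ (v : Q.V) (t : Fin (n + 1)), ∃! e : Q.E, Q.src e = v ∧ Q.typ e = t
  connected : ∀ u w : Q.V, ∃ γ : Q.Path u w, γ.Admissible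
  circuit : ∀ (u w : Q.V) (γ : Q.Path u w), γ.MaximalSimple → u = w
  same_type : ∀ (u w x : Q.V) (γ : Q.Path u w) (μ : Q.Path u x),
      γ.Admissible → μ.Admissible → (w = x ↔ γ.count = μ.count)

/-- Two distinct vertices are neighbors if an admissible simple path connects them. -/
def Neighbors (Q : TypedQuiver n) (u w : Q.V) : Prop :=
  u ≠ w ∧ ∃ γ : Q.Path u w, γ.Admissible ∧ γ.Simple

/-- The hull of a set of vertices. -/
def hull (Q : TypedQuiver n) (H : Set Q.V) : Set Q.V :=
  {v | ∀ t : Fin (n + 1), ∃ z ∈ H, ∃ γ : Q.Path z v, γ.count t = 0}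

/-- A representation of a typed quiver in a category. -/
structure Rep (Q : TypedQuiver n) (C : Type u) [Category.{v} C] where
  obj : Q.V → C
  map : ∀ e : Q.E, obj (Q.src e) ⟶ obj (Q.tgt e)

namespace Rep

variable {Q : TypedQuiver n} {C : Type u} [Category.{v} C]

/-- The composition of the maps of a representation along a path. -/
def mapPath (𝔙 : Q.Rep C) : ∀ {u w : Q.V}, Q.Path u w → (𝔙.obj u ⟶ 𝔙.obj w)
  | _, _, .nil _ => 𝟙 _
  | _, _, .cons e γ => mapPath 𝔙 γ ≫ 𝔙.map e

end Rep

/-- A weakly linked net over a `ℤⁿ`-quiver. -/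
structure IsWeaklyLinked (k : Type) [Field k] {Q : TypedQuiver n} {C : Type u}
    [Category.{v} C] [Preadditive C] [CategoryTheory.Linear k C] (𝔙 : Q.Rep C) : Prop where
  scalar : ∀ (u w : Q.V) (γ₁ γ₂ : Q.Path u w), γ₂.Admissible →
      ∃ c : k, c ≠ 0 ∧ 𝔙.mapPath γ₁ = c • 𝔙.mapPath γ₂
  circuit : ∀ (u w : Q.V) (γ : Q.Path u w), γ.MaximalSimple → 𝔙.mapPath γ = 0

section Abelian

variable {Q : TypedQuiver n} {C : Type u} [Category.{v} C] [Abelian C]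

/-- A linked net: kernels along admissible paths with disjoint essential types meet trivially. -/
def IsLinked (𝔙 : Q.Rep C) : Prop :=
  ∀ (u w x : Q.V) (γ₁ : Q.Path u w) (γ₂ : Q.Path u x), γ₁.Admissible → γ₂.Admissible →
    γ₁.essType ∩ γ₂.essType = ∅ →
    kernelSubobject (𝔙.mapPath γ₁) ⊓ kernelSubobject (𝔙.mapPath γ₂) = ⊥

/-- Exactness: `Ker φ^u_w = Im φ^w_u` for neighboring vertices. -/
def IsExact (𝔙 : Q.Rep C) : Prop :=
  ∀ (u w : Q.V), Q.Neighbors u w → ∀ (γ : Q.Path u w) (μ : Q.Path w u),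
    γ.Admissible → μ.Admissible →
    kernelSubobject (𝔙.mapPath γ) = imageSubobject (𝔙.mapPath μ)

/-- Binary: each associated map is zero or a monomorphism. -/
def IsBinary (𝔙 : Q.Rep C) : Prop :=
  ∀ (u w : Q.V) (γ : Q.Path u w), 𝔙.mapPath γ = 0 ∨ Mono (𝔙.mapPath γ)

/-- Pure: each epimorphism among the associated maps is an isomorphism. -/
def IsPure (𝔙 : Q.Rep C) : Prop :=
  ∀ (u w : Q.V) (γ : Q.Path u w), Epi (𝔙.mapPath γ) → IsIso (𝔙.mapPath γ)

/-- Locally finite: compositions along long enough arriving paths vanish. -/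
def LocallyFinite (𝔙 : Q.Rep C) : Prop :=
  ∀ v : Q.V, ∃ ℓ : ℕ, ∀ (u : Q.V) (γ : Q.Path u v), ℓ < γ.length → 𝔙.mapPath γ = 0

/-- Faithfully generated by a vertex `w`: `φ^w_v` is an isomorphism for every `v`. -/
def FaithfullyGeneratedBy (𝔙 : Q.Rep C) (w : Q.V) : Prop :=
  ∀ (v : Q.V) (γ : Q.Path w v), γ.Admissible → IsIso (𝔙.mapPath γ)

/-- Generated by a set `H`: the images of compositions along paths from `H` to `v` sum
to the whole object at `v` (stated via upper bounds of subobjects). -/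
def GeneratedBy (𝔙 : Q.Rep C) (H : Set Q.V) : Prop :=
  ∀ v : Q.V, ∀ W : Subobject (𝔙.obj v),
    (∀ z ∈ H, ∀ γ : Q.Path z v, imageSubobject (𝔙.mapPath γ) ≤ W) → W = ⊤

/-- 1-generated by a set `H`. -/
def OneGeneratedBy (𝔙 : Q.Rep C) (H : Set Q.V) : Prop :=
  ∀ v : Q.V, ∃ w ∈ H, ∃ γ : Q.Path w v, γ.Admissible ∧ Epi (𝔙.mapPath γ)

/-- A subobject-valued sum being everything, stated via upper bounds. -/
def SumTop {X : C} (S : Set (Subobject X)) : Prop :=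
  ∀ W : Subobject X, (∀ s ∈ S, s ≤ W) → W = ⊤

/-- A primitive vertex for a net: the images of the maps of arrows arriving at `w` do
not sum to the whole object. -/
def Primitive (𝔙 : Q.Rep C) (w : Q.V) : Prop :=
  ¬ SumTop {s : Subobject (𝔙.obj w) | ∃ (e : Q.E) (h : Q.tgt e = w),
      s = imageSubobject (𝔙.map e ≫ eqToHom (congrArg 𝔙.obj h))}

/-- The intersection property at a vertex `v`, where `K v I` denotes `Ker φ^v_I`. -/
def IntersectionProp (𝔙 : Q.Rep C)
    (K : ∀ v : Q.V, Set (Fin (n + 1)) → Subobject (𝔙.obj v)) (v : Q.V) : Prop :=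
  ∀ (m : ℕ) (I : Fin (m + 1) → Set (Fin (n + 1))),
    (Finset.univ.sup fun ℓ : Fin m => K v (I ℓ.succ)) ⊓ K v (I 0)
      = Finset.univ.sup fun ℓ : Fin m => K v (I ℓ.succ ∩ I 0)

end Abelian

end TypedQuiver
open TypedQuiver in
/-- `StepRel Q v I w`: `w = I · v`, i.e. some simple path of essential type `I`
connects `v` to `w`. -/
def StepRel {n : ℕ} (Q : TypedQuiver n) (v : Q.V) (I : Set (Fin (n + 1))) (w : Q.V) :
    Prop :=
  ∃ γ : Q.Path v w, γ.Simple ∧ γ.essType = I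


section Zn
open TypedQuiver TypedQuiver.Path Classical

variable {n : ℕ} {Q : TypedQuiver n}

noncomputable def ind (I : Set (Fin (n + 1))) : Fin (n + 1) → ℕ :=
  fun t => if t ∈ I then 1 else 0

lemma count_comp : ∀ {u w x : Q.V} (γ : Q.Path u w) (δ : Q.Path w x) (t : Fin (n + 1)),
    (γ.comp δ).count t = γ.count t + δ.count t := by
  intro u w x γ δ
  induction δ with
  | nil => intro t; simp [Path.comp, Path.count]
  | cons e δ ih => intro t; simp [Path.comp, Path.count, ih]; ring

lemma simple_count {u w : Q.V} {γ : Q.Path u w} (h : γ.Simple) :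
    γ.count = ind γ.essType := by
  funext t
  rcases Nat.eq_zero_or_pos (γ.count t) with h0 | h0
  · have : t ∉ γ.essType := by simp [Path.essType, h0]
    simp [ind, this, h0]
  · have ht : t ∈ γ.essType := h0
    have := h t
    simp [ind, ht]; omega

lemma simple_count' {u w : Q.V} {γ : Q.Path u w} (h : γ.Simple) {I : Set (Fin (n+1))}
    (hI : γ.essType = I) : γ.count = ind I := by rw [simple_count h, hI]

lemma simple_admissible {u w : Q.V} {γ : Q.Path u w} (h : γ.Simple)
    (hI : γ.essType ≠ Set.univ) : γ.Admissible := by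
  obtain ⟨t, ht⟩ : ∃ t, t ∉ γ.essType := by
    by_contra hc; push_neg at hc
    exact hI (Set.eq_univ_of_forall hc)
  refine ⟨t, ?_⟩
  have := congrFun (simple_count h) t
  simpa [ind, ht] using this

lemma adm_count_eq (hQ : Q.IsZn) {u w : Q.V} (γ μ : Q.Path u w)
    (hγ : γ.Admissible) (hμ : μ.Admissible) : γ.count = μ.count :=
  (hQ.same_type u w w γ μ hγ hμ).mp rfl

lemma adm_endpoint (hQ : Q.IsZn) {u w x : Q.V} (γ : Q.Path u w) (μ : Q.Path u x)
    (hγ : γ.Admissible) (hμ : μ.Admissible) (h : γ.count = μ.count) : w = x :=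
  (hQ.same_type u w x γ μ hγ hμ).mpr h

lemma adm_essType_eq (hQ : Q.IsZn) {u w : Q.V} (γ μ : Q.Path u w)
    (hγ : γ.Admissible) (hμ : μ.Admissible) : γ.essType = μ.essType := by
  have h := adm_count_eq hQ γ μ hγ hμ
  ext t; simp [Path.essType, congrFun h t]

/-- Existence of a path with counts given by a list. -/
lemma exists_path_count (hQ : Q.IsZn) (v : Q.V) (l : List (Fin (n + 1))) :
    ∃ (w : Q.V) (γ : Q.Path v w), ∀ t, γ.count t = l.count t := by
  induction l with
  | nil => exact ⟨v, .nil v, fun t => by simp [Path.count]⟩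
  | cons a l ih =>
      obtain ⟨w, γ, hγ⟩ := ih
      obtain ⟨e, ⟨hsrc, htyp⟩, -⟩ := hQ.unique_out w a
      subst hsrc
      refine ⟨Q.tgt e, .cons e γ, fun t => ?_⟩
      rcases eq_or_ne a t with h | h
      · subst h; simp [Path.count, hγ a, List.count_cons, htyp]
      · simp [Path.count, hγ t, List.count_cons, htyp, beq_iff_eq, h, Ne.symm h]

/-- Existence of a simple path with any prescribed essential type. -/
lemma exists_step (hQ : Q.IsZn) (v : Q.V) (I : Set (Fin (n + 1))) :
    ∃ (w : Q.V), StepRel Q v I w := by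
  classical
  obtain ⟨w, γ, hγ⟩ := exists_path_count hQ v (Set.toFinite I).toFinset.toList
  have hcount : ∀ t, γ.count t = if t ∈ I then 1 else 0 := by
    intro t
    rw [hγ t]
    by_cases ht : t ∈ I
    · rw [if_pos ht]
      exact List.count_eq_one_of_mem (Finset.nodup_toList _)
        (by simp only [Finset.mem_toList, Set.Finite.mem_toFinset]; exact ht)
    · rw [if_neg ht]
      exact List.count_eq_zero_of_not_mem
        (by simp only [Finset.mem_toList, Set.Finite.mem_toFinset]; exact ht)
  refine ⟨w, γ, fun t => by rw [hcount t]; split <;> omega, ?_⟩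
  ext t; by_cases ht : t ∈ I <;> simp [Path.essType, hcount t, ht]

/-- The essential type connecting two neighbors. -/
noncomputable def itype {u w : Q.V} (h : Q.Neighbors u w) : Set (Fin (n + 1)) :=
  h.2.choose.essType

lemma itype_spec {u w : Q.V} (h : Q.Neighbors u w) :
    ∃ γ : Q.Path u w, γ.Admissible ∧ γ.Simple ∧ γ.essType = itype h :=
  ⟨h.2.choose, h.2.choose_spec.1, h.2.choose_spec.2, rfl⟩

lemma stepRel_itype {u w : Q.V} (h : Q.Neighbors u w) : StepRel Q u (itype h) w :=
  ⟨h.2.choose, h.2.choose_spec.2, rfl⟩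

lemma itype_ne_univ {u w : Q.V} (h : Q.Neighbors u w) : itype h ≠ Set.univ := by
  obtain ⟨γ, ⟨t, ht⟩, hs, he⟩ := itype_spec h
  intro hc
  have : t ∈ γ.essType := by rw [he, hc]; trivial
  simp [Path.essType, ht] at this

lemma itype_nonempty (hQ : Q.IsZn) {u w : Q.V} (h : Q.Neighbors u w) :
    (itype h).Nonempty := by
  obtain ⟨γ, ha, hs, he⟩ := itype_spec h
  rcases Set.eq_empty_or_nonempty (itype h) with h0 | h0
  · exfalso
    apply h.1
    refine adm_endpoint hQ (Path.nil u) γ ⟨⟨0, by omega⟩, by simp [Path.count]⟩ ha ?_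
    funext t
    have := congrFun (simple_count' hs he) t
    simp [Path.count, this, ind, h0]
  · exact h0

/-- Any simple admissible path between neighbors realizes `itype`. -/
lemma itype_unique (hQ : Q.IsZn) {u w : Q.V} (h : Q.Neighbors u w) (γ : Q.Path u w)
    (hs : γ.Simple) (ha : γ.Admissible) : γ.essType = itype h := by
  obtain ⟨μ, hμa, hμs, hμe⟩ := itype_spec h
  rw [← hμe]
  exact adm_essType_eq hQ γ μ ha hμa

/-- Two simple paths out of `v` with the same proper essential type end at the same
vertex. -/
lemma step_endpoint_unique (hQ : Q.IsZn) {v w x : Q.V} (γ : Q.Path v w) (μ : Q.Path v x)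
    (hγs : γ.Simple) (hμs : μ.Simple) (he : γ.essType = μ.essType)
    (hne : γ.essType ≠ Set.univ) : w = x := by
  refine adm_endpoint hQ γ μ (simple_admissible hγs hne) (simple_admissible hμs (he ▸ hne)) ?_
  rw [simple_count hγs, simple_count hμs, he]

/-- Reversal: a simple path can be completed to a circuit; the reverse leg has
complementary essential type. -/
lemma exists_reverse (hQ : Q.IsZn) {v w : Q.V} (γ : Q.Path v w) (hs : γ.Simple) :
    StepRel Q w (γ.essType)ᶜ v := by
  obtain ⟨x, μ, hμs, hμe⟩ := exists_step hQ w (γ.essType)ᶜ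
  have hmax : (γ.comp μ).MaximalSimple := by
    intro t
    rw [count_comp, congrFun (simple_count hs) t, congrFun (simple_count' hμs hμe) t]
    by_cases ht : t ∈ γ.essType <;> simp [ind, ht]
  have hvx := hQ.circuit v x (γ.comp μ) hmax
  subst hvx
  exact ⟨μ, hμs, hμe⟩

lemma stepRel_reverse (hQ : Q.IsZn) {v u : Q.V} (h : Q.Neighbors v u) :
    StepRel Q u (itype h)ᶜ v := by
  obtain ⟨γ, ha, hs, he⟩ := itype_spec h
  have := exists_reverse hQ γ hs
  rwa [he] at this

lemma ind_add_eq {A B S : Set (Fin (n + 1))}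
    (h : ∀ t, ind A t + ind B t = ind S t) : A ∩ B = ∅ ∧ S = A ∪ B := by
  constructor
  · ext t
    have := h t
    by_cases hA : t ∈ A <;> by_cases hB : t ∈ B <;>
      simp_all [ind] <;> split at this <;> omega
  · ext t
    have := h t
    by_cases hA : t ∈ A <;> by_cases hB : t ∈ B <;> by_cases hS : t ∈ S <;>
      simp_all [ind]

/-- Core composition analysis: if the concatenation of two simple paths misses a type,
then their essential types are disjoint and any simple admissible path with the same
endpoints has essential type their union. -/
lemma comp_analysis (hQ : Q.IsZn) {x y z : Q.V} (γ₁ : Q.Path x y) (γ₂ : Q.Path y z)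
    (μ : Q.Path x z) (h1 : γ₁.Simple) (h2 : γ₂.Simple) (hμs : μ.Simple)
    (hμa : μ.Admissible) (t0 : Fin (n + 1)) (ht1 : t0 ∉ γ₁.essType)
    (ht2 : t0 ∉ γ₂.essType) :
    γ₁.essType ∩ γ₂.essType = ∅ ∧ μ.essType = γ₁.essType ∪ γ₂.essType := by
  have hadm : (γ₁.comp γ₂).Admissible := by
    refine ⟨t0, ?_⟩
    rw [count_comp, congrFun (simple_count h1) t0, congrFun (simple_count h2) t0]
    simp [ind, ht1, ht2]
  have hc := adm_count_eq hQ (γ₁.comp γ₂) μ hadm hμa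
  refine ind_add_eq fun t => ?_
  have := congrFun hc t
  rw [count_comp, congrFun (simple_count h1) t, congrFun (simple_count h2) t,
    congrFun (simple_count hμs) t] at this
  exact this

/-- The chain trichotomy for three pairwise neighboring vertices. -/
lemma chain_lemma (hQ : Q.IsZn) {v u w : Q.V} (hu : Q.Neighbors v u)
    (hw : Q.Neighbors v w) (huw : Q.Neighbors u w) :
    (itype hu ⊂ itype hw ∧ itype huw = itype hw \ itype hu) ∨
    (itype hw ⊂ itype hu ∧ itype huw = (itype hu)ᶜ ∪ itype hw) := by
  obtain ⟨γA, hAa, hAs, hAe⟩ := itype_spec hu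
  obtain ⟨γC, hCa, hCs, hCe⟩ := itype_spec hw
  obtain ⟨γB, hBa, hBs, hBe⟩ := itype_spec huw
  have hAC : itype hu ≠ itype hw := by
    intro hAC
    exact huw.1 (step_endpoint_unique hQ γA γC hAs hCs (by rw [hAe, hCe, hAC])
      (by rw [hAe]; exact itype_ne_univ hu))
  by_cases hd : (itype hw \ itype hu).Nonempty
  · left
    obtain ⟨t0, ht0C, ht0A⟩ := hd
    obtain ⟨ρC, hρCs, hρCe⟩ := stepRel_reverse hQ hw
    obtain ⟨ρB, hρBs, hρBe⟩ := stepRel_reverse hQ huw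
    have hρBa : ρB.Admissible := by
      apply simple_admissible hρBs
      rw [hρBe]
      intro hc
      obtain ⟨t, ht⟩ := itype_nonempty hQ huw
      have : t ∈ (itype huw)ᶜ := by rw [hc]; trivial
      exact this ht
    have := comp_analysis hQ ρC γA ρB hρCs hAs hρBs hρBa t0
      (by rw [hρCe]; simpa using ht0C) (by rw [hAe]; exact ht0A)
    rw [hρCe, hAe, hρBe] at this
    obtain ⟨hdisj, hun⟩ := this
    have hsub : itype hu ⊆ itype hw := by
      intro t ht
      by_contra htc
      have : t ∈ (itype hw)ᶜ ∩ itype hu := ⟨htc, ht⟩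
      rw [hdisj] at this
      exact this
    refine ⟨⟨hsub, fun hc => hAC (hsub.antisymm hc)⟩, ?_⟩
    have := congrArg (·ᶜ) hun
    simp only [compl_compl, Set.compl_union] at this
    rw [this]; rfl
  · right
    rw [Set.not_nonempty_iff_eq_empty, Set.diff_eq_empty] at hd
    have hsub : itype hw ⊂ itype hu := ⟨hd, fun hc => hAC (hc.antisymm hd)⟩
    obtain ⟨t0, ht0A, ht0C⟩ : (itype hu \ itype hw).Nonempty := by
      rcases Set.eq_empty_or_nonempty (itype hu \ itype hw) with h0 | h0
      · rw [Set.diff_eq_empty] at h0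
        exact absurd (h0.antisymm hd) hAC
      · exact h0
    obtain ⟨ρA, hρAs, hρAe⟩ := stepRel_reverse hQ hu
    have := comp_analysis hQ ρA γC γB hρAs hCs hBs hBa t0
      (by rw [hρAe]; simpa using ht0A) (by rw [hCe]; exact ht0C)
    rw [hρAe, hCe, hBe] at this
    exact ⟨hsub, this.2⟩

/-- Composite step: `I(v,w) = I(v,u) ∪ J` when `w = J·u`, `J` disjoint from `I(v,u)`
and the union is proper. -/
lemma itype_comp (hQ : Q.IsZn) {v u w : Q.V} (hvu : Q.Neighbors v u)
    (hvw : Q.Neighbors v w) {J : Set (Fin (n + 1))} (hJ : StepRel Q u J w)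
    (hdisj : itype hvu ∩ J = ∅) (hne : itype hvu ∪ J ≠ Set.univ) :
    itype hvw = itype hvu ∪ J := by
  obtain ⟨γ, ha, hs, he⟩ := itype_spec hvu
  obtain ⟨δ, hδs, hδe⟩ := hJ
  have hcount : ∀ t, (γ.comp δ).count t = ind (itype hvu ∪ J) t := by
    intro t
    rw [count_comp, congrFun (simple_count' hs he) t, congrFun (simple_count' hδs hδe) t]
    by_cases h1 : t ∈ itype hvu <;> by_cases h2 : t ∈ J
    · exact absurd (hdisj ▸ (⟨h1, h2⟩ : t ∈ itype hvu ∩ J)) (Set.notMem_empty t)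
    all_goals simp [ind, h1, h2]
  have hsimple : (γ.comp δ).Simple := by
    intro t; rw [hcount t]; unfold ind; split <;> omega
  have hess : (γ.comp δ).essType = itype hvu ∪ J := by
    ext t
    by_cases ht : t ∈ itype hvu ∪ J <;> simp [Path.essType, hcount t, ind, ht]
  rw [← itype_unique hQ hvw (γ.comp δ) hsimple (simple_admissible hsimple (hess ▸ hne)), hess]

end Zn

set_option maxHeartbeats 1600000 in
open TypedQuiver in
/-- An `m`-gon (`m ≥ 2`) containing a vertex `v` admits a unique ordering
`v₁,…,v_m` with `v₁ = v` forming an oriented `m`-gon: there are nonempty pairwise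
disjoint sets of arrow types `I₁,…,I_m` covering all types with `v_{i+1} = Iᵢ · vᵢ`
cyclically. In particular `m ≤ n + 1`. -/
theorem stmt8 {n : ℕ} (Q : TypedQuiver n) (hQ : Q.IsZn) (m : ℕ) (hm : 2 ≤ m)
    (Δ : Finset Q.V) (hcard : Δ.card = m)
    (hpoly : ∀ u ∈ Δ, ∀ w ∈ Δ, u ≠ w → Q.Neighbors u w)
    (v : Q.V) (hv : v ∈ Δ) :
    m ≤ n + 1 ∧
    ∃! σ : Fin m → Q.V,
      Function.Injective σ ∧ (∀ i, σ i ∈ Δ) ∧ σ ⟨0, by omega⟩ = v ∧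
      ∃ I : Fin m → Set (Fin (n + 1)),
        (∀ i, (I i).Nonempty) ∧
        (∀ i j, i ≠ j → I i ∩ I j = ∅) ∧
        (⋃ i, I i) = Set.univ ∧
        (∀ i : Fin m,
          StepRel Q (σ i) (I i) (σ ⟨(i.1 + 1) % m, Nat.mod_lt _ (by omega)⟩)) := by
  classical
  -- Setup: the other vertices of the polygon
  set S : Finset Q.V := Δ.erase v with hSdef
  have hS : S.card = m - 1 := by rw [hSdef, Finset.card_erase_of_mem hv, hcard]
  have hvS : v ∉ S := Finset.notMem_erase v Δ
  have hSΔ : ∀ u ∈ S, u ∈ Δ := fun u hu => Finset.mem_of_mem_erase hu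
  have hSne : ∀ u ∈ S, u ≠ v := fun u hu => Finset.ne_of_mem_erase hu
  have hnbr : ∀ u ∈ S, Q.Neighbors v u := fun u hu =>
    hpoly v hv u (hSΔ u hu) (Ne.symm (hSne u hu))
  -- The essential type from `v` to each other vertex, and its cardinality
  let J : Q.V → Set (Fin (n + 1)) := fun u => if h : Q.Neighbors v u then itype h else ∅
  have hJdef : ∀ {u : Q.V} (h : Q.Neighbors v u), J u = itype h := fun {u} h => dif_pos h
  let key : Q.V → ℕ := fun u => (J u).ncard
  have hkeydef : ∀ u, key u = (J u).ncard := fun _ => rfl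
  have hJne : ∀ u ∈ S, (J u).Nonempty := fun u hu => by
    rw [hJdef (hnbr u hu)]; exact itype_nonempty hQ _
  have hJuniv : ∀ u ∈ S, J u ≠ Set.univ := fun u hu => by
    rw [hJdef (hnbr u hu)]; exact itype_ne_univ _
  have hchain : ∀ u ∈ S, ∀ w ∈ S, u ≠ w → J u ⊂ J w ∨ J w ⊂ J u := by
    intro u hu w hw huw
    have h := chain_lemma hQ (hnbr u hu) (hnbr w hw)
      (hpoly u (hSΔ u hu) w (hSΔ w hw) huw)
    rw [hJdef (hnbr u hu), hJdef (hnbr w hw)]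
    rcases h with ⟨h, -⟩ | ⟨h, -⟩
    · exact Or.inl h
    · exact Or.inr h
  have hkeylt : ∀ u ∈ S, ∀ w ∈ S, J u ⊂ J w → key u < key w := fun u _ w _ h =>
    Set.ncard_lt_ncard h (Set.toFinite _)
  have hkeymono : ∀ u ∈ S, ∀ w ∈ S, key u < key w → J u ⊂ J w := by
    intro u hu w hw hk
    rcases eq_or_ne u w with rfl | huw
    · omega
    rcases hchain u hu w hw huw with h | h
    · exact h
    · exact absurd (hkeylt w hw u hu h) (by omega)
  have hkeyinj : Set.InjOn key S := by
    intro u hu w hw h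
    by_contra huw
    rcases hchain u hu w hw huw with hc | hc
    · exact absurd h (Nat.ne_of_lt (hkeylt u hu w hw hc))
    · exact absurd h.symm (Nat.ne_of_lt (hkeylt w hw u hu hc))
  -- m ≤ n + 1
  have hmn : m ≤ n + 1 := by
    have hsub : S.image key ⊆ Finset.Icc 1 n := by
      intro c hc
      obtain ⟨u, hu, rfl⟩ := Finset.mem_image.mp hc
      rw [Finset.mem_Icc]
      constructor
      · rw [hkeydef u]
        have h1 : 0 < (J u).ncard := (Set.ncard_pos (Set.toFinite _)).mpr (hJne u hu)
        omega
      · rw [hkeydef u]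
        have h2 : (J u).ncard < (Set.univ : Set (Fin (n + 1))).ncard :=
          Set.ncard_lt_ncard (Set.ssubset_univ_iff.mpr (hJuniv u hu)) (Set.toFinite _)
        rw [Set.ncard_univ, Nat.card_eq_fintype_card, Fintype.card_fin] at h2
        omega
    have hle := Finset.card_le_card hsub
    rw [Finset.card_image_of_injOn hkeyinj, hS, Nat.card_Icc] at hle
    omega
  refine ⟨hmn, ?_⟩
  -- The canonical enumeration of S by increasing key
  set T : Finset ℕ := S.image key with hTdef
  have hT : T.card = m - 1 := by rw [hTdef, Finset.card_image_of_injOn hkeyinj, hS]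
  have hex : ∀ j : Fin (m - 1), ∃ u, u ∈ S ∧ key u = T.orderEmbOfFin hT j := by
    intro j
    have hmem : (T.orderEmbOfFin hT j : ℕ) ∈ S.image key := Finset.orderEmbOfFin_mem T hT j
    obtain ⟨u, hu, hku⟩ := Finset.mem_image.mp hmem
    exact ⟨u, hu, hku⟩
  let e : Fin (m - 1) → Q.V := fun j => (hex j).choose
  have heS : ∀ j, e j ∈ S := fun j => (hex j).choose_spec.1
  have hek : ∀ j, key (e j) = T.orderEmbOfFin hT j := fun j => (hex j).choose_spec.2
  have hekmono : StrictMono (fun j => key (e j)) := by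
    intro a b hab
    show key (e a) < key (e b)
    rw [hek a, hek b]
    exact (T.orderEmbOfFin hT).strictMono hab
  have heinj : Function.Injective e := fun a b hab =>
    hekmono.injective (by rw [hab])
  have heJ : ∀ a b : Fin (m - 1), a < b → J (e a) ⊂ J (e b) := fun a b hab =>
    hkeymono _ (heS a) _ (heS b) (hekmono hab)
  have hesurj : ∀ u ∈ S, ∃ j, e j = u := by
    intro u hu
    have hcard' : (Finset.univ.image e).card = m - 1 := by
      rw [Finset.card_image_of_injective _ heinj, Finset.card_univ, Fintype.card_fin]
    have hsub : Finset.univ.image e ⊆ S := by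
      intro x hx
      obtain ⟨j, -, rfl⟩ := Finset.mem_image.mp hx
      exact heS j
    have hES : Finset.univ.image e = S :=
      Finset.eq_of_subset_of_card_le hsub (by omega)
    rw [← hES] at hu
    obtain ⟨j, -, rfl⟩ := Finset.mem_image.mp hu
    exact ⟨j, rfl⟩
  -- The ordering and the partition
  let σn : ℕ → Q.V := fun k => if h : k = 0 ∨ m ≤ k then v else e ⟨k - 1, by omega⟩
  have hσn0 : σn 0 = v := dif_pos (Or.inl rfl)
  have hσn : ∀ k (h1 : 0 < k) (h2 : k < m) (hk : k - 1 < m - 1),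
      σn k = e ⟨k - 1, hk⟩ := fun k h1 h2 hk => dif_neg (by omega)
  let F : ℕ → Set (Fin (n + 1)) := fun k =>
    if h0 : k = 0 then ∅ else if h1 : k < m then J (e ⟨k - 1, by omega⟩) else Set.univ
  have hF0 : F 0 = ∅ := dif_pos rfl
  have hFs : ∀ k (h1 : 0 < k) (h2 : k < m) (hk : k - 1 < m - 1),
      F k = J (e ⟨k - 1, hk⟩) := fun k h1 h2 hk => by
    show dite _ _ _ = _
    rw [dif_neg (by omega), dif_pos h2]
  have hFm : ∀ k, m ≤ k → F k = Set.univ := fun k hk => by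
    show dite _ _ _ = _
    rw [dif_neg (by omega), dif_neg (by omega)]
  have hFss : ∀ k, k < m → F k ⊂ F (k + 1) := by
    intro k hk
    rcases Nat.eq_zero_or_pos k with rfl | hkpos
    · rw [hF0, hFs 1 (by omega) (by omega) (by omega)]
      exact (Set.empty_ssubset).mpr (hJne _ (heS _))
    · rcases eq_or_ne (k + 1) m with hkm | hkm
      · rw [hFm (k + 1) (by omega), hFs k hkpos hk (by omega)]
        exact Set.ssubset_univ_iff.mpr (hJuniv _ (heS _))
      · rw [hFs k hkpos hk (by omega), hFs (k + 1) (by omega) (by omega) (by omega)]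
        exact heJ _ _ (by rw [Fin.mk_lt_mk]; omega)
  have hFmono : Monotone F := by
    apply monotone_nat_of_le_succ
    intro k
    rcases Nat.lt_or_ge k m with hk | hk
    · exact (hFss k hk).subset
    · rw [hFm k hk, hFm (k + 1) (by omega)]
  refine ⟨fun i => σn i.1, ⟨?_, ?_, ?_, ?_⟩, ?_⟩
  · -- injectivity
    intro a b hab
    replace hab : σn a.1 = σn b.1 := hab
    apply Fin.ext
    by_cases ha : a.1 = 0 <;> by_cases hb : b.1 = 0
    · omega
    · rw [ha, hσn0, hσn b.1 (by omega) b.2 (by omega)] at hab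
      exact absurd (heS _) (hab ▸ hvS)
    · rw [hb, hσn0, hσn a.1 (by omega) a.2 (by omega)] at hab
      exact absurd (heS _) (hab.symm ▸ hvS)
    · rw [hσn a.1 (by omega) a.2 (by omega), hσn b.1 (by omega) b.2 (by omega)] at hab
      have := congrArg Fin.val (heinj hab)
      simp only at this
      omega
  · -- membership
    intro i
    show σn i.1 ∈ Δ
    by_cases hi : i.1 = 0
    · rw [hi, hσn0]; exact hv
    · rw [hσn i.1 (by omega) i.2 (by omega)]
      exact hSΔ _ (heS _)
  · -- starts at v
    exact hσn0
  · -- the partition and the steps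
    refine ⟨fun i => F (i.1 + 1) \ F i.1, ?_, ?_, ?_, ?_⟩
    · intro i
      rw [Set.diff_nonempty]
      exact (hFss i.1 i.2).not_subset
    · -- pairwise disjoint
      have hdisj : ∀ i j : Fin m, i.1 < j.1 →
          (F (i.1 + 1) \ F i.1) ∩ (F (j.1 + 1) \ F j.1) = ∅ := by
        intro i j hij
        ext t
        simp only [Set.mem_inter_iff, Set.mem_diff, Set.mem_empty_iff_false, iff_false]
        rintro ⟨⟨h1, -⟩, ⟨-, h4⟩⟩
        exact h4 (hFmono (by omega : i.1 + 1 ≤ j.1) h1)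
      intro i j hij
      rcases Nat.lt_or_ge i.1 j.1 with h | h
      · exact hdisj i j h
      · have : j.1 < i.1 := by
          rcases Nat.lt_or_ge j.1 i.1 with h' | h'
          · exact h'
          · exact absurd (Fin.ext (by omega)) hij
        rw [Set.inter_comm]
        exact hdisj j i this
    · -- union is everything
      apply Set.eq_univ_of_forall
      intro t
      have hPm : t ∈ F m := by rw [hFm m le_rfl]; trivial
      have hex0 : ∃ k, t ∈ F k := ⟨m, hPm⟩
      have hk1 : 0 < Nat.find hex0 := by
        rcases Nat.eq_zero_or_pos (Nat.find hex0) with h0 | h0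
        · have := Nat.find_spec hex0
          rw [h0, hF0] at this
          exact absurd this (Set.notMem_empty t)
        · exact h0
      have hkm : Nat.find hex0 ≤ m := Nat.find_min' hex0 hPm
      refine Set.mem_iUnion.mpr ⟨⟨Nat.find hex0 - 1, by omega⟩, ?_, ?_⟩
      · show t ∈ F (Nat.find hex0 - 1 + 1)
        rw [show Nat.find hex0 - 1 + 1 = Nat.find hex0 by omega]
        exact Nat.find_spec hex0
      · show t ∉ F (Nat.find hex0 - 1)
        exact Nat.find_min hex0 (by omega)
    · -- the steps
      intro i
      show StepRel Q (σn i.1) (F (i.1 + 1) \ F i.1) (σn ((i.1 + 1) % m))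
      by_cases hi0 : i.1 = 0
      · rw [hi0, hσn0, hF0, Set.diff_empty,
          show (0 + 1) % m = 1 from Nat.mod_eq_of_lt (by omega),
          hσn 1 (by omega) (by omega) (by omega),
          show F 1 = J (e ⟨0, by omega⟩) from hFs 1 (by omega) (by omega) (by omega)]
        have h := stepRel_itype (hnbr _ (heS ⟨0, by omega⟩))
        rwa [← hJdef (hnbr _ (heS ⟨0, by omega⟩))] at h
      · by_cases him : i.1 = m - 1
        · -- last step, back to v
          rw [him, show (m - 1 + 1) % m = 0 by
              rw [show m - 1 + 1 = m by omega]; exact Nat.mod_self m,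
            hσn0, hσn (m - 1) (by omega) (by omega) (by omega),
            hFm (m - 1 + 1) (by omega),
            show F (m - 1) = J (e ⟨m - 1 - 1, by omega⟩) from
              hFs (m - 1) (by omega) (by omega) (by omega)]
          -- goal : StepRel Q (e ⟨m-2,_⟩) (univ \ J (e ⟨m-2,_⟩)) v
          rw [← Set.compl_eq_univ_diff]
          have h := stepRel_reverse hQ (hnbr _ (heS ⟨m - 1 - 1, by omega⟩))
          rwa [← hJdef (hnbr _ (heS ⟨m - 1 - 1, by omega⟩))] at h
        · -- middle step
          have hi1 : 0 < i.1 := by omega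
          have hi2 : i.1 < m - 1 := by have := i.2; omega
          rw [show (i.1 + 1) % m = i.1 + 1 from Nat.mod_eq_of_lt (by omega),
            hσn i.1 hi1 i.2 (by omega), hσn (i.1 + 1) (by omega) (by omega) (by omega),
            show F i.1 = J (e ⟨i.1 - 1, by omega⟩) from hFs i.1 hi1 i.2 (by omega),
            show F (i.1 + 1) = J (e ⟨i.1 + 1 - 1, by omega⟩) from
              hFs (i.1 + 1) (by omega) (by omega) (by omega)]
          have hab : (⟨i.1 - 1, by omega⟩ : Fin (m - 1)) < ⟨i.1 + 1 - 1, by omega⟩ := by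
            rw [Fin.mk_lt_mk]; omega
          have hne : e ⟨i.1 - 1, by omega⟩ ≠ e ⟨i.1 + 1 - 1, by omega⟩ := by
            intro hc
            have := congrArg Fin.val (heinj hc)
            simp only at this
            omega
          have huw : Q.Neighbors (e ⟨i.1 - 1, by omega⟩) (e ⟨i.1 + 1 - 1, by omega⟩) :=
            hpoly _ (hSΔ _ (heS _)) _ (hSΔ _ (heS _)) hne
          have hlt := heJ _ _ hab
          rcases chain_lemma hQ (hnbr _ (heS ⟨i.1 - 1, by omega⟩))
              (hnbr _ (heS ⟨i.1 + 1 - 1, by omega⟩)) huw with ⟨-, hB⟩ | ⟨hss, -⟩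
          · have h := stepRel_itype huw
            rw [hB, ← hJdef (hnbr _ (heS ⟨i.1 - 1, by omega⟩)),
              ← hJdef (hnbr _ (heS ⟨i.1 + 1 - 1, by omega⟩))] at h
            exact h
          · exfalso
            rw [← hJdef (hnbr _ (heS ⟨i.1 - 1, by omega⟩)),
              ← hJdef (hnbr _ (heS ⟨i.1 + 1 - 1, by omega⟩))] at hss
            exact ssubset_asymm hlt hss
  · -- uniqueness
    rintro σ' ⟨hinj', hmem', h0', I', hIne', hIdisj', hIuniv', hstep'⟩
    -- Nat-indexed versions
    let τ : ℕ → Q.V := fun k => σ' ⟨k % m, Nat.mod_lt _ (by omega)⟩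
    let I'' : ℕ → Set (Fin (n + 1)) := fun k => I' ⟨k % m, Nat.mod_lt _ (by omega)⟩
    have hτ0 : τ 0 = v := by
      rw [show τ 0 = σ' ⟨0, by omega⟩ from congrArg σ' (Fin.ext (Nat.zero_mod m))]
      exact h0'
    have hτval : ∀ i : Fin m, τ i.1 = σ' i := fun i =>
      congrArg σ' (Fin.ext (Nat.mod_eq_of_lt i.2))
    have hI''ne : ∀ k, (I'' k).Nonempty := fun k => hIne' _
    have hI''disj : ∀ k l, k < m → l < m → k ≠ l → I'' k ∩ I'' l = ∅ := by
      intro k l hk hl hkl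
      apply hIdisj'
      intro hc
      have := congrArg Fin.val hc
      simp only [Nat.mod_eq_of_lt hk, Nat.mod_eq_of_lt hl] at this
      exact hkl this
    have hstepτ : ∀ k : ℕ, StepRel Q (τ k) (I'' k) (τ (k + 1)) := by
      intro k
      have h := hstep' ⟨k % m, Nat.mod_lt _ (by omega)⟩
      rw [show τ (k + 1) = σ' ⟨(k % m + 1) % m, Nat.mod_lt _ (by omega)⟩ from
        congrArg σ' (Fin.ext (by
          show (k + 1) % m = (k % m + 1) % m
          conv_lhs => rw [Nat.add_mod]
          rw [Nat.mod_eq_of_lt (show 1 < m by omega)]))]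
      exact h
    have hτS : ∀ k, 0 < k → k < m → τ k ∈ S := by
      intro k h1 h2
      rw [hSdef]
      refine Finset.mem_erase.mpr ⟨?_, hmem' _⟩
      intro hc
      have heq : σ' ⟨k % m, Nat.mod_lt _ (by omega)⟩ = σ' ⟨0, by omega⟩ :=
        hc.trans h0'.symm
      have := congrArg Fin.val (hinj' heq)
      simp only [Nat.mod_eq_of_lt h2] at this
      omega
    -- partial unions
    let U : ℕ → Set (Fin (n + 1)) := fun k => {t | ∃ j, j < k ∧ t ∈ I'' j}
    have hUmono : ∀ k l, k ≤ l → U k ⊆ U l := by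
      intro k l hkl t ht
      obtain ⟨j, hj, htj⟩ := ht
      exact ⟨j, by omega, htj⟩
    have hUdisj : ∀ k, k ≤ m - 1 → U k ∩ I'' k = ∅ := by
      intro k hk
      ext t
      simp only [Set.mem_inter_iff, Set.mem_empty_iff_false, iff_false]
      rintro ⟨⟨j, hj, htj⟩, htk⟩
      have : t ∈ I'' j ∩ I'' k := ⟨htj, htk⟩
      rw [hI''disj j k (by omega) (by omega) (by omega)] at this
      exact this
    have hUsucc : ∀ k, U (k + 1) = U k ∪ I'' k := by
      intro k
      ext t
      simp only [Set.mem_union, Set.mem_setOf_eq]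
      constructor
      · rintro ⟨j, hj, ht⟩
        rcases eq_or_ne j k with rfl | hjk
        · exact Or.inr ht
        · exact Or.inl ⟨j, by omega, ht⟩
      · rintro (⟨j, hj, ht⟩ | ht)
        · exact ⟨j, by omega, ht⟩
        · exact ⟨k, by omega, ht⟩
    have hUne : ∀ k, k ≤ m - 1 → U k ≠ Set.univ := by
      intro k hk hc
      obtain ⟨t, ht⟩ := hI''ne (m - 1)
      have htU : t ∈ U k := by rw [hc]; trivial
      obtain ⟨j, hj, htj⟩ := htU
      have : t ∈ I'' j ∩ I'' (m - 1) := ⟨htj, ht⟩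
      rw [hI''disj j (m - 1) (by omega) (by omega) (by omega)] at this
      exact this
    have hUss : ∀ k, k ≤ m - 1 → U k ⊂ U (k + 1) := by
      intro k hk
      obtain ⟨t, ht⟩ := hI''ne k
      refine ⟨hUmono k (k + 1) (by omega), fun hc => ?_⟩
      have htk : t ∈ U k := hc ⟨k, by omega, ht⟩
      have : t ∈ U k ∩ I'' k := ⟨htk, ht⟩
      rw [hUdisj k hk] at this
      exact this
    -- the main induction
    have hmain : ∀ k, 1 ≤ k → k ≤ m - 1 → J (τ k) = U k := by
      intro k
      induction k with
      | zero => omega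
      | succ k ih =>
        intro _ hk1
        have hnbk1 : Q.Neighbors v (τ (k + 1)) :=
          hnbr _ (hτS (k + 1) (by omega) (by omega))
        have hst := hstepτ k
        rcases Nat.eq_zero_or_pos k with rfl | hkpos
        · rw [hτ0] at hst
          obtain ⟨γ, hγs, hγe⟩ := hst
          have hU1 : U 1 = I'' 0 := by rw [hUsucc 0]; ext t; simp [U]
          have hne : I'' 0 ≠ Set.univ := by
            have := hUne 1 (by omega)
            rwa [hU1] at this
          rw [hJdef hnbk1,
            ← itype_unique hQ hnbk1 γ hγs (simple_admissible hγs (hγe ▸ hne)), hγe, hU1]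
        · have hnbk : Q.Neighbors v (τ k) := hnbr _ (hτS k (by omega) (by omega))
          have ihJ := ih (by omega) (by omega)
          have hit : itype hnbk = U k := by rw [← hJdef hnbk, ihJ]
          have hd : itype hnbk ∩ I'' k = ∅ := by
            rw [hit]
            exact hUdisj k (by omega)
          have hun : itype hnbk ∪ I'' k = U (k + 1) := by
            rw [hit, hUsucc k]
          have hne : itype hnbk ∪ I'' k ≠ Set.univ := by
            rw [hun]
            exact hUne (k + 1) hk1
          rw [hJdef hnbk1, itype_comp hQ hnbk hnbk1 hst hd hne, hun]
    -- conclude σ' = σ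
    have hτe : ∀ j : Fin (m - 1), τ (j.1 + 1) = e j := by
      have hfmem : ∀ j : Fin (m - 1), key (τ (j.1 + 1)) ∈ T := by
        intro j
        rw [hTdef]
        exact Finset.mem_image_of_mem key (hτS (j.1 + 1) (by omega) (by omega))
      have hfmono : StrictMono fun j : Fin (m - 1) => key (τ (j.1 + 1)) := by
        intro a b hab
        have hab' : a.1 < b.1 := hab
        show key (τ (a.1 + 1)) < key (τ (b.1 + 1))
        have hJa := hmain (a.1 + 1) (by omega) (by omega)
        have hJb := hmain (b.1 + 1) (by omega) (by omega)
        rw [hkeydef, hkeydef, hJa, hJb]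
        refine Set.ncard_lt_ncard ?_ (Set.toFinite _)
        exact ssubset_of_subset_of_ssubset (hUmono (a.1 + 1) b.1 (by omega))
          (hUss b.1 (by omega))
      have hfeq := Finset.orderEmbOfFin_unique hT hfmem hfmono
      intro j
      apply hkeyinj (hτS (j.1 + 1) (by omega) (by omega)) (heS j)
      rw [congrFun hfeq j, hek j]
    funext i
    show σ' i = σn i.1
    by_cases hi : i.1 = 0
    · rw [hi, hσn0, show i = ⟨0, by omega⟩ from Fin.ext hi]
      exact h0'
    · have h1 : σ' i = τ i.1 := (hτval i).symm
      have h2 : τ i.1 = τ ((i.1 - 1) + 1) := by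
        rw [show (i.1 - 1) + 1 = i.1 by omega]
      rw [hσn i.1 (by omega) i.2 (by omega), h1, h2]
      exact hτe ⟨i.1 - 1, by omega⟩
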